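/- Let N ≥ 4, let f_1,...,f_{N−1} be commuting indeterminates, β_1,...,β_{N−2} real constants, and λ a parameter. Define F_m(λ) = ∏_{n=m}^{N−2} (1 + (λ + β_n) ∂²/∂f_n ∂f_{n+1}) applied to f_m f_{m+1} ⋯ f_{N−1}, for 1 ≤ m ≤ N−2, and F_{N−1}(λ) = f_{N−1}. Then F_m(λ) equals the determinant of the (N−m)×(N−m) tridiagonal matrix whose diagonal entries are f_m, f_{m+1}, ..., f_{N−1}, whose entries on the first superdiagonal are all 1, and whose entries on the first subdiagonal are −λ−β_m, −λ−β_{m+1}, ..., −λ−β_{N−2}. -/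

import Mathlib

/-- The Veselov–Shabat operator 1 + (λ + β_n) ∂²/∂f_n ∂f_{n+1} on the polynomial ring
in the variables f_1, f_2, … over ℝ[λ]. -/
noncomputable def vsOp (β : ℕ → ℝ) (n : ℕ) (p : MvPolynomial ℕ (Polynomial ℝ)) :
    MvPolynomial ℕ (Polynomial ℝ) :=
  p + MvPolynomial.C (Polynomial.X + Polynomial.C (β n)) *
      MvPolynomial.pderiv n (MvPolynomial.pderiv (n + 1) p)

/-- F_m(λ) = ∏_{n=m}^{N−2} (1 + (λ + β_n) ∂²/∂f_n ∂f_{n+1}) (f_m f_{m+1} ⋯ f_{N−1});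
for m = N−1 this is just f_{N−1}. -/
noncomputable def vsF (β : ℕ → ℝ) (N m : ℕ) : MvPolynomial ℕ (Polynomial ℝ) :=
  (List.range' m (N - 1 - m)).foldr (vsOp β)
    (∏ n ∈ Finset.Icc m (N - 1), MvPolynomial.X n)

/-! Expanding along the first row shows that the determinants `D_m` of the tridiagonal matrices
satisfy the continuant recurrence `D_m = f_m D_{m+1} + (λ + β_m) D_{m+2}`, with `D_{N-1} = f_{N-1}`
and `D_N = 1`. The polynomials `F_m` satisfy the same recurrence: the operators with index `n > m`
commute with multiplication by `f_m`, so `F_m = (1 + (λ + β_m) ∂_m ∂_{m+1}) (f_m F_{m+1})`, and since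
`F_{m+1}` does not involve `f_m` this equals `f_m F_{m+1} + (λ + β_m) ∂_{m+1} F_{m+1}`; the same
identity one step later gives `∂_{m+1} F_{m+1} = F_{m+2}`. -/

namespace Matrix

variable {R : Type*}

def tridiagonal [Zero R] (d u l : ℕ → R) (m k : ℕ) : Matrix (Fin k) (Fin k) R :=
  of fun i j =>
    if (i : ℕ) = j then d (m + i)
    else if (j : ℕ) = i + 1 then u (m + i)
    else if (i : ℕ) = j + 1 then l (m + j)
    else 0

theorem tridiagonal_submatrix_succ [Zero R] (d u l : ℕ → R) (m k : ℕ) :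
    (tridiagonal d u l m (k + 1)).submatrix Fin.succ Fin.succ = tridiagonal d u l (m + 1) k := by
  ext i j
  simp only [tridiagonal, submatrix_apply, of_apply, Fin.val_succ, ← add_assoc,
    add_right_comm m 1]
  split_ifs <;> first | rfl | omega

theorem det_tridiagonal_succ_succ [CommRing R] (d u l : ℕ → R) (m k : ℕ) :
    (tridiagonal d u l m (k + 2)).det =
      d m * (tridiagonal d u l (m + 1) (k + 1)).det
        - u m * l m * (tridiagonal d u l (m + 2) k).det := by
  set T := tridiagonal d u l m (k + 2)
  have first_row (t : Fin k) : T 0 t.succ.succ = 0 := by simp [T, tridiagonal]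
  -- the only nonzero entry in the first column of this minor is `l m`
  have det_minor_zero_one : (T.submatrix Fin.succ (Fin.succ 0).succAbove).det =
      l m * (tridiagonal d u l (m + 2) k).det := by
    have first_col (t : Fin k) : T t.succ.succ 0 = 0 := by simp [T, tridiagonal]
    rw [det_succ_column_zero, Fin.sum_univ_succ,
      Finset.sum_eq_zero fun t _ => by simp [first_col], add_zero]
    have succAbove_succ : ((Fin.succ 0).succAbove ∘ Fin.succ : Fin k → Fin (k + 2)) =
        Fin.succ ∘ Fin.succ :=
      funext fun t => Fin.succ_succAbove_succ 0 t
    rw [submatrix_submatrix, Fin.succAbove_zero, succAbove_succ, ← submatrix_submatrix,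
      tridiagonal_submatrix_succ, tridiagonal_submatrix_succ]
    simp [T, tridiagonal, add_assoc]
  rw [det_succ_row_zero, Fin.sum_univ_succ, Fin.sum_univ_succ,
    Finset.sum_eq_zero fun t _ => by simp [first_row], add_zero, Fin.succAbove_zero,
    tridiagonal_submatrix_succ, det_minor_zero_one]
  simp [T, tridiagonal]
  ring

end Matrix

namespace MvPolynomial

variable {R σ : Type*} [CommSemiring R]

theorem pderiv_pderiv_comm (i j : σ) (p : MvPolynomial σ R) :
    pderiv i (pderiv j p) = pderiv j (pderiv i p) := by
  induction p using MvPolynomial.induction_on' with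
  | add p q hp hq => simp only [map_add, hp, hq]
  | monomial s a =>
    obtain rfl | hij := eq_or_ne i j
    · rfl
    simp only [pderiv_monomial, Finsupp.tsub_apply, Finsupp.single_eq_of_ne hij,
      Finsupp.single_eq_of_ne hij.symm, Nat.sub_zero]
    rw [tsub_right_comm, mul_right_comm]

theorem pderiv_prod_X_of_notMem {j : σ} {s : Finset σ} (h : j ∉ s) :
    pderiv j (∏ n ∈ s, X n : MvPolynomial σ R) = 0 := by
  classical
  induction s using Finset.induction_on with
  | empty => simp
  | insert n s hn ih =>
    rw [Finset.prod_insert hn, pderiv_mul,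
      pderiv_X_of_ne (by rintro rfl; exact h (Finset.mem_insert_self _ _)),
      ih fun hj => h (Finset.mem_insert_of_mem hj)]
    simp

end MvPolynomial

open MvPolynomial

section VeselovShabat

variable (β : ℕ → ℝ)

theorem pderiv_vsOp (j n : ℕ) (p : MvPolynomial ℕ (Polynomial ℝ)) :
    pderiv j (vsOp β n p) = vsOp β n (pderiv j p) := by
  rw [vsOp, vsOp, map_add, pderiv_C_mul, pderiv_pderiv_comm j n, pderiv_pderiv_comm j (n + 1)]

theorem pderiv_foldr_vsOp (j : ℕ) (l : List ℕ) (p : MvPolynomial ℕ (Polynomial ℝ)) :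
    pderiv j (l.foldr (vsOp β) p) = l.foldr (vsOp β) (pderiv j p) :=
  (List.foldr_hom (pderiv j) fun n q => (pderiv_vsOp β j n q).symm).symm

theorem vsOp_mul_of_pderiv_eq_zero {n : ℕ} {q : MvPolynomial ℕ (Polynomial ℝ)}
    (hn : pderiv n q = 0) (hn₁ : pderiv (n + 1) q = 0) (p : MvPolynomial ℕ (Polynomial ℝ)) :
    vsOp β n (q * p) = q * vsOp β n p := by
  simp only [vsOp, pderiv_mul, hn, hn₁, zero_mul, zero_add]
  ring

theorem foldr_vsOp_mul_of_pderiv_eq_zero {l : List ℕ} {q : MvPolynomial ℕ (Polynomial ℝ)}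
    (hq : ∀ n ∈ l, pderiv n q = 0 ∧ pderiv (n + 1) q = 0) (p : MvPolynomial ℕ (Polynomial ℝ)) :
    l.foldr (vsOp β) (q * p) = q * l.foldr (vsOp β) p := by
  induction l with
  | nil => rfl
  | cons n l ih =>
    obtain ⟨hn, hn₁⟩ := hq n List.mem_cons_self
    rw [List.foldr_cons, List.foldr_cons, ih fun k hk => hq k (List.mem_cons_of_mem n hk),
      vsOp_mul_of_pderiv_eq_zero β hn hn₁]

theorem vsOp_X_mul_of_pderiv_eq_zero {n : ℕ} {p : MvPolynomial ℕ (Polynomial ℝ)}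
    (hp : pderiv n p = 0) :
    vsOp β n (X n * p) =
      X n * p + C (Polynomial.X + Polynomial.C (β n)) * pderiv (n + 1) p := by
  rw [vsOp, pderiv_mul, pderiv_X_of_ne (by omega), zero_mul, zero_add, pderiv_mul,
    pderiv_X_self, one_mul, pderiv_pderiv_comm, hp, map_zero, mul_zero, add_zero]

theorem pderiv_vsF_of_lt {N m j : ℕ} (h : j < m) : pderiv j (vsF β N m) = 0 := by
  rw [vsF, pderiv_foldr_vsOp, pderiv_prod_X_of_notMem (by rw [Finset.mem_Icc]; omega)]
  exact List.foldr_fixed' (fun n => by simp [vsOp]) _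

theorem vsF_eq_vsOp {N m : ℕ} (h : m < N - 1) :
    vsF β N m = vsOp β m (X m * vsF β N (m + 1)) := by
  obtain ⟨k, hk⟩ : ∃ k, N - 1 - m = k + 1 := ⟨N - 1 - (m + 1), by omega⟩
  rw [vsF, vsF, hk, List.range'_succ, List.foldr_cons,
    ← Finset.insert_Icc_add_one_left_eq_Icc h.le, Finset.prod_insert (by simp),
    foldr_vsOp_mul_of_pderiv_eq_zero β fun n hn => ?_, show N - 1 - (m + 1) = k by omega]
  rw [List.mem_range'_1] at hn
  exact ⟨pderiv_X_of_ne (by omega), pderiv_X_of_ne (by omega)⟩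

theorem vsF_pred (N : ℕ) : vsF β N (N - 1) = X (N - 1) := by
  simp [vsF]

theorem vsF_self {N : ℕ} (hN : 1 ≤ N) : vsF β N N = 1 := by
  simp [vsF, Finset.Icc_eq_empty_of_lt (show N - 1 < N by omega)]

theorem vsF_eq_X_mul_add_pderiv {N m : ℕ} (h : m < N - 1) :
    vsF β N m = X m * vsF β N (m + 1) +
      C (Polynomial.X + Polynomial.C (β m)) * pderiv (m + 1) (vsF β N (m + 1)) := by
  rw [vsF_eq_vsOp β h, vsOp_X_mul_of_pderiv_eq_zero β (pderiv_vsF_of_lt β m.lt_succ_self)]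

theorem pderiv_vsF_self {N m : ℕ} (hN : 1 ≤ N) (h : m ≤ N - 1) :
    pderiv m (vsF β N m) = vsF β N (m + 1) := by
  obtain h | rfl := h.lt_or_eq
  · rw [vsF_eq_X_mul_add_pderiv β h, map_add, pderiv_mul, pderiv_X_self, one_mul, pderiv_C_mul,
      pderiv_vsF_of_lt β m.lt_succ_self, pderiv_pderiv_comm, pderiv_vsF_of_lt β m.lt_succ_self]
    simp
  · rw [vsF_pred, pderiv_X_self, Nat.sub_add_cancel hN, vsF_self β hN]

theorem vsF_eq_X_mul_add_vsF {N m : ℕ} (h : m + 2 ≤ N) :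
    vsF β N m = X m * vsF β N (m + 1) +
      C (Polynomial.X + Polynomial.C (β m)) * vsF β N (m + 2) := by
  rw [vsF_eq_X_mul_add_pderiv β (by omega), pderiv_vsF_self β (by omega) (by omega)]

theorem vsF_eq_det_tridiagonal {N m : ℕ} (hN : 1 ≤ N) (hm : m ≤ N) :
    vsF β N m = (Matrix.tridiagonal X (fun _ => 1)
      (fun i => -C (Polynomial.X + Polynomial.C (β i))) m (N - m)).det := by
  generalize hk : N - m = k
  induction k using Nat.twoStepInduction generalizing m with
  | zero => rw [show m = N by omega, vsF_self β hN, Matrix.det_isEmpty]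
  | one =>
    rw [show m = N - 1 by omega, vsF_pred, Matrix.det_unique]
    simp [Matrix.tridiagonal]
  | more k ih₀ ih₁ =>
    rw [vsF_eq_X_mul_add_vsF β (by omega), Matrix.det_tridiagonal_succ_succ,
      ih₁ (by omega) (by omega), ih₀ (by omega) (by omega)]
    ring

end VeselovShabat

theorem vsF_determinant_formula_general (N : ℕ) (β : ℕ → ℝ) :
    ∀ m : ℕ, 1 ≤ m → m ≤ N - 1 →
      vsF β N m
        = Matrix.det (Matrix.of fun i j : Fin (N - m) =>
            if (i : ℕ) = (j : ℕ) then MvPolynomial.X (m + (i : ℕ))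
            else if (j : ℕ) = (i : ℕ) + 1 then 1
            else if (i : ℕ) = (j : ℕ) + 1 then
              -(MvPolynomial.C (Polynomial.X + Polynomial.C (β (m + (j : ℕ)))))
            else 0) :=
  fun _ hm hmN => vsF_eq_det_tridiagonal β (by omega) (by omega)

/-- F_m(λ) equals the determinant of the (N−m)×(N−m) tridiagonal matrix
with diagonal f_m, …, f_{N−1}, superdiagonal entries 1 and subdiagonal entries
−λ−β_m, …, −λ−β_{N−2}. -/
theorem vsF_determinant_formula (N : ℕ) (hN : 4 ≤ N) (β : ℕ → ℝ) :
    ∀ m : ℕ, 1 ≤ m → m ≤ N - 1 →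
      vsF β N m
        = Matrix.det (Matrix.of fun i j : Fin (N - m) =>
            if (i : ℕ) = (j : ℕ) then MvPolynomial.X (m + (i : ℕ))
            else if (j : ℕ) = (i : ℕ) + 1 then 1
            else if (i : ℕ) = (j : ℕ) + 1 then
              -(MvPolynomial.C (Polynomial.X + Polynomial.C (β (m + (j : ℕ)))))
            else 0) :=
  vsF_determinant_formula_general N β
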